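/- Fix a finite set X = {0 = x_1 < ... < x_N = 1} with minimal gap h. The set of continuous functions f with |f(x_{i+1}) − f(x_i)| > h for all i = 1,...,N−1 is open in C([0,1]), and for any g ∈ C([0,1]) and ε > h there exists f in this set with ‖f − g‖_∞ < ε. -/

import Mathlib

open Set Filter Topology List

noncomputable section

abbrev I01 : Set ℝ := Set.Icc 0 1

abbrev CI := C(I01, ℝ)

/-- Evaluate `f ∈ C([0,1])` at a real number (via projection onto `[0,1]`;
for `x ∈ [0,1]` this is just `f x`). -/
def evalI (f : CI) (x : ℝ) : ℝ := f (Set.projIcc 0 1 (by norm_num) x)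

/-- The list of gaps between consecutive points. -/
def gaps (l : List ℝ) : List ℝ := List.zipWith (fun a b => b - a) l l.tail

/-- Maximal resolution (maximal gap). -/
def maxGap (l : List ℝ) : ℝ := (gaps l).foldr max 0

/-- Minimal resolution (minimal gap). -/
def minGap (l : List ℝ) : ℝ := (gaps l).foldr min 1

def intDiffs (l : List ℤ) : List ℤ := List.zipWith (fun a b => b - a) l l.tail

/-- Quantitative code of `f` with respect to the discretization `X` and step `h`. -/
def Qcode (f : CI) (X : List ℝ) (h : ℝ) : List ℤ :=
  intDiffs (X.map fun x => ⌊evalI f x / h⌋)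

/-- Qualitative code: the signs of the quantitative code. -/
def qcode (f : CI) (X : List ℝ) (h : ℝ) : List ℤ := (Qcode f X h).map Int.sign

/-- Stretched code: each positive entry `z` of the quantitative code becomes `z` ones
followed by a zero, each negative entry `z` becomes `|z|` minus-ones followed by a zero,
and each zero entry a single zero. -/
def scode (f : CI) (X : List ℝ) (h : ℝ) : List ℤ :=
  (Qcode f X h).flatMap fun z =>
    if 0 < z then List.replicate z.toNat 1 ++ [0]
    else if z < 0 then List.replicate (-z).toNat (-1) ++ [0]
    else [0]

/-- Number of occurrences of the word `w` in the word `v`. -/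
def oc {A : Type*} [DecidableEq A] (w v : List A) : ℕ :=
  ((List.range (v.length - w.length + 1)).filter
    fun j => (v.drop j).take w.length = w).length

/-- Relative frequency of the word `w` in the word `v`. -/
def freq {A : Type*} [DecidableEq A] (w v : List A) : ℝ := (oc w v : ℝ) / v.length

/-- Minimal periodic factor length of `w`. -/
def pmin {A : Type*} [DecidableEq A] (w : List A) : ℕ :=
  sInf {s : ℕ | 0 < s ∧ ∃ u : List A, u.length = s ∧ oc w (w ++ u) = 2}

/-- A discretization system of `[0,1]`. -/
structure DiscretizationSystem where
  X : ℕ → List ℝ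
  sorted : ∀ n, (X n).Chain' (· < ·)
  mem_Icc : ∀ n, ∀ x ∈ X n, x ∈ I01
  head_eq : ∀ n, (X n).head? = some 0
  last_eq : ∀ n, (X n).getLast? = some 1
  nested : ∀ n, ∀ x ∈ X n, x ∈ X (n + 1)
  maxres_to_zero : Tendsto (fun n => maxGap (X n)) atTop (nhds 0)

theorem isOpen_setOf_isChain {X β : Type*} [TopologicalSpace X] (R : X → β → β → Prop)
    (hR : ∀ a b, IsOpen {x | R x a b}) :
    ∀ l : List β, IsOpen {x | l.IsChain (R x)}
  | [] => by simp
  | [_] => by simp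
  | a :: b :: t => by
    simp only [List.isChain_cons_cons, Set.ofPred_and]
    exact (hR a b).inter (isOpen_setOf_isChain R hR (b :: t))

theorem minGap_cons_cons (a b : ℝ) (t : List ℝ) :
    minGap (a :: b :: t) = min (b - a) (minGap (b :: t)) := rfl

theorem minGap_pos : ∀ {X : List ℝ}, X.IsChain (· < ·) → 0 < minGap X
  | [], _ => one_pos
  | [_], _ => one_pos
  | a :: b :: t, hX => by
    rw [List.isChain_cons_cons] at hX
    rw [minGap_cons_cons]
    exact lt_min (sub_pos.mpr hX.1) (minGap_pos hX.2)

theorem exists_abs_le_le_abs_sub (u : ℝ) {c : ℝ} (hc : 0 ≤ c) :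
    ∃ s, |s| ≤ c ∧ c ≤ |s - u| := by
  rcases le_or_gt u 0 with hu | hu
  · exact ⟨c, (abs_of_nonneg hc).le, by rw [abs_of_nonneg (by linarith)]; linarith⟩
  · exact ⟨-c, by rw [abs_neg, abs_of_nonneg hc], by rw [abs_of_neg (by linarith)]; linarith⟩

/-- Choosing the perturbation greedily from the last point backwards, each new value is pushed
to the side of `g a` away from the already fixed value at the next point. -/
theorem exists_perturbation_isChain {α : Type*} (g : α → ℝ) {c : ℝ} (hc : 0 ≤ c) :
    ∀ {l : List α}, l.Nodup →
      ∃ r : α → ℝ, (∀ x, |r x| ≤ c) ∧ l.IsChain fun a b => c ≤ |g b + r b - (g a + r a)|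
  | [], _ => ⟨0, fun _ => by simpa using hc, .nil⟩
  | [_], _ => ⟨0, fun _ => by simpa using hc, .singleton _⟩
  | a :: b :: t, hl => by
    classical
    obtain ⟨ha, hbt⟩ := List.nodup_cons.mp hl
    obtain ⟨r, hr, hchain⟩ := exists_perturbation_isChain g hc hbt
    obtain ⟨s, hs, hfar⟩ := exists_abs_le_le_abs_sub (g b + r b - g a) hc
    refine ⟨Function.update r a s, fun x => ?_, List.isChain_cons_cons.mpr ⟨?_, ?_⟩⟩
    · rcases eq_or_ne x a with rfl | hx
      · simpa using hs
      · simpa [hx] using hr x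
    · have hba : b ≠ a := fun h => ha (h ▸ List.mem_cons_self)
      rw [Function.update_self, Function.update_of_ne hba, abs_sub_comm]
      convert hfar using 2
      ring
    · refine hchain.imp_of_mem_imp fun x y hx hy hxy => ?_
      rwa [Function.update_of_ne (ne_of_mem_of_not_mem hx ha),
        Function.update_of_ne (ne_of_mem_of_not_mem hy ha)]

/-- Clamping the Lagrange interpolation polynomial to `[-c, c]` keeps the prescribed values. -/
theorem exists_continuous_eqOn_abs_le (s : Finset ℝ) (r : ℝ → ℝ) {c : ℝ} (hc : 0 ≤ c)
    (hr : ∀ x ∈ s, |r x| ≤ c) :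
    ∃ φ : C(ℝ, ℝ), (∀ x ∈ s, φ x = r x) ∧ ∀ t, |φ t| ≤ c := by
  set P := Lagrange.interpolate s id r
  refine ⟨⟨fun t => max (-c) (min c (P.eval t)), by fun_prop⟩, fun x hx => ?_, fun t => ?_⟩
  · have hP : P.eval x = r x := Lagrange.eval_interpolate_at_node r (Set.injOn_id _) hx
    obtain ⟨hlo, hhi⟩ := abs_le.mp (hr x hx)
    simp [hP, min_eq_right hhi, max_eq_right hlo]
  · exact abs_le.mpr ⟨le_max_left _ _, max_le (by linarith) (min_le_left _ _)⟩

theorem continuous_evalI (x : ℝ) : Continuous fun f : CI => evalI f x :=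
  continuous_eval_const _

theorem evalI_add_restrict (g : CI) (φ : C(ℝ, ℝ)) {x : ℝ} (hx : x ∈ I01) :
    evalI (g + φ.restrict I01) x = evalI g x + φ x := by
  simp [evalI, Set.projIcc_of_mem _ hx]

theorem exists_dist_le_isChain (g : CI) {X : List ℝ} (hX : X.Nodup) (hsub : ∀ x ∈ X, x ∈ I01)
    {c : ℝ} (hc : 0 ≤ c) :
    ∃ f : CI, dist f g ≤ c ∧ X.IsChain fun a b => c ≤ |evalI f b - evalI f a| := by
  obtain ⟨r, hr, hchain⟩ := exists_perturbation_isChain (evalI g) hc hX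
  obtain ⟨φ, hφr, hφ⟩ := exists_continuous_eqOn_abs_le X.toFinset r hc fun x _ => hr x
  refine ⟨g + φ.restrict I01, (ContinuousMap.dist_le hc).mpr fun x => ?_, ?_⟩
  · simpa [Real.dist_eq] using hφ x
  · refine hchain.imp_of_mem_imp fun a b ha hb hab => ?_
    rwa [evalI_add_restrict g φ (hsub a ha), evalI_add_restrict g φ (hsub b hb),
      hφr a (List.mem_toFinset.mpr ha), hφr b (List.mem_toFinset.mpr hb)]

theorem stmt9_general (X : List ℝ) (hch : X.Chain' (· < ·)) (hsub : ∀ x ∈ X, x ∈ I01) :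
    IsOpen {f : CI | X.Chain' fun a b => minGap X < |evalI f b - evalI f a|} ∧
    ∀ g : CI, ∀ ε : ℝ, minGap X < ε →
      ∃ f ∈ {f : CI | X.Chain' fun a b => minGap X < |evalI f b - evalI f a|},
        dist f g < ε := by
  refine ⟨isOpen_setOf_isChain _ (fun a b => isOpen_lt continuous_const
    ((continuous_evalI b).sub (continuous_evalI a)).abs) X, fun g ε hε => ?_⟩
  have hgap : 0 < minGap X := minGap_pos hch
  obtain ⟨f, hdist, hchain⟩ := exists_dist_le_isChain g (List.isChain_iff_pairwise.mp hch).nodup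
    hsub (c := (minGap X + ε) / 2) (by linarith)
  exact ⟨f, hchain.imp fun a b hab => by linarith, by linarith⟩

/-- the set of `f` whose consecutive increments along a fixed
discretization `X` all exceed the minimal gap `h` is open, and any `g` can be
`ε`-approximated by such an `f` whenever `ε > h`. -/
theorem stmt9 (X : List ℝ) (hch : X.Chain' (· < ·)) (hsub : ∀ x ∈ X, x ∈ I01)
    (h0 : X.head? = some 0) (h1 : X.getLast? = some 1) :
    IsOpen {f : CI | X.Chain' fun a b => minGap X < |evalI f b - evalI f a|} ∧
    ∀ g : CI, ∀ ε : ℝ, minGap X < ε →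
      ∃ f ∈ {f : CI | X.Chain' fun a b => minGap X < |evalI f b - evalI f a|},
        dist f g < ε :=
  stmt9_general X hch hsub
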